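/- Let T be a tree with n ≥ 2 leaves, let η = (p_1, …, p_k) be a k-partition of n, and let ℓ be a bijection from the leaf set ∂(T) of T to the vertex set V(D_η) (an η-labeling). Let 𝒫(T,η,ℓ) be the collection of all directed paths T⃗[u,v], over pairs of leaves u,v of T such that (ℓ(u),ℓ(v)) is an arc of D_η, where T⃗[u,v] denotes the unique path of T between u and v, directed from u to v. Then for every edge e ∈ E(T), at least four directed paths in 𝒫(T,η,ℓ) traverse e. -/

import Mathlib

open scoped Classical

/-- The vertex set of the auxiliary multidigraph `D_η` associated to the
`k`-partition `η = (p 0, …, p (k-1))`: the vertices `v^i_j` for `1 ≤ i ≤ k`,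
`1 ≤ j ≤ p i` (here `⟨i, j⟩` stands for `v^(i+1)_(j+1)`). -/
def PartVert (k : ℕ) (p : Fin k → ℕ) : Type :=
  Σ i : Fin k, Fin (p i)

instance (k : ℕ) (p : Fin k → ℕ) : Fintype (PartVert k p) :=
  Sigma.instFintype

instance (k : ℕ) (p : Fin k → ℕ) : DecidableEq (PartVert k p) :=
  Sigma.instDecidableEqSigma

/-- The multiplicity of the arc `(a, b)` in the multidigraph `D_η`.
For `k = 1` the arcs are `(v^1_j, v^1_{j+1})` and `(v^1_{j+1}, v^1_j)` for
`j = 1, …, n` (indices of the second coordinate taken modulo `n = p 1`).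
For `k ≥ 2` the arcs are `(v^i_j, v^i_{j+1})` and `(v^i_{j+1}, v^i_j)` for
`1 ≤ i ≤ k`, `1 ≤ j ≤ p i - 1`, together with `(v^i_1, v^{i+1}_1)` and
`(v^i_{p i}, v^{i+1}_{p (i+1)})` for `1 ≤ i ≤ k` (upper indices modulo `k`). -/
def arcMult {k : ℕ} (p : Fin k → ℕ) (a b : PartVert k p) : ℕ :=
  if k = 1 then
    (if b.2.val = (a.2.val + 1) % p a.1 then 1 else 0) +
    (if a.2.val = (b.2.val + 1) % p b.1 then 1 else 0)
  else
    (if a.1 = b.1 ∧ (b.2.val = a.2.val + 1 ∨ a.2.val = b.2.val + 1) then 1 else 0) +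
    (if a.2.val = 0 ∧ b.2.val = 0 ∧ b.1.val = (a.1.val + 1) % k then 1 else 0) +
    (if a.2.val = p a.1 - 1 ∧ b.2.val = p b.1 - 1 ∧ b.1.val = (a.1.val + 1) % k
      then 1 else 0)

/-!
Deleting an edge `xy` of `T` leaves two sides, each containing a leaf of `T`, and the path
between two leaves uses `xy` exactly when they lie on different sides. Transported along `ℓ`,
the sides become a non-constant two-colouring of `D_η`, and the paths through `xy` are the
arcs of `D_η` joining the two colours. So it suffices that every non-constant colouring of
`D_η` is crossed by four arcs, counted with multiplicity.

Along a closed walk a non-constant colouring changes at least twice; along a path it changes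
at least once if the ends differ, and at least twice if the ends agree but an inner vertex
does not. For `k = 1`, `D_η` is a cycle traversed in both directions, giving `2 · 2` arcs.
For `k ≥ 2` it consists of the paths `v^i_1 ⋯ v^i_{p_i}`, traversed in both directions, and
two directed cycles through their first and through their last vertices; a case distinction
on which of the two cycles are monochromatic always finds four crossing arcs, each crossing
edge of a path counting twice.
-/

section ChangeCount

variable {C : Type*}

noncomputable def changeCount (c : ℕ → C) (a b : ℕ) : ℕ :=
  ∑ j ∈ Finset.Ico a b, if c j ≠ c (j + 1) then 1 else 0

theorem one_le_changeCount (c : ℕ → C) {a b : ℕ} (hab : a ≤ b) (h : c a ≠ c b) :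
    1 ≤ changeCount c a b := by
  induction b, hab using Nat.le_induction with
  | base => exact absurd rfl h
  | succ b hab ih =>
    rw [changeCount, Finset.sum_Ico_succ_top hab]
    by_cases hb : c b = c (b + 1)
    · exact le_add_right (ih (hb ▸ h))
    · simp [hb]

theorem two_le_changeCount (c : ℕ → C) {a j b : ℕ} (haj : a ≤ j) (hjb : j ≤ b)
    (hab : c a = c b) (hj : c j ≠ c a) : 2 ≤ changeCount c a b := by
  have h₁ := one_le_changeCount c haj (Ne.symm hj)
  have h₂ := one_le_changeCount c hjb (hab ▸ hj)
  rw [changeCount, ← Finset.sum_Ico_consecutive _ haj hjb]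
  exact add_le_add h₁ h₂

theorem two_le_changeCount_of_closed (c : ℕ → C) {n i j : ℕ} (hn : c n = c 0) (hi : i ≤ n)
    (hj : j ≤ n) (hij : c i ≠ c j) : 2 ≤ changeCount c 0 n := by
  by_cases hi₀ : c i = c 0
  · exact two_le_changeCount c (Nat.zero_le j) hj hn.symm (fun h => hij (hi₀.trans h.symm))
  · exact two_le_changeCount c (Nat.zero_le i) hi hn.symm hi₀

end ChangeCount

section CutWeight

variable {α C : Type*} [Fintype α]

noncomputable def cutWeight (w : α → α → ℕ) (g : α → C) : ℕ :=
  ∑ a, ∑ b, if g a ≠ g b then w a b else 0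

theorem cutWeight_add (w₁ w₂ : α → α → ℕ) (g : α → C) :
    cutWeight (fun a b => w₁ a b + w₂ a b) g = cutWeight w₁ g + cutWeight w₂ g := by
  simp only [cutWeight, ← Finset.sum_add_distrib, ite_add_ite, add_zero]

theorem cutWeight_swap (w : α → α → ℕ) (g : α → C) :
    cutWeight (fun a b => w b a) g = cutWeight w g := by
  rw [cutWeight, Finset.sum_comm]
  simp only [cutWeight, ne_comm]

theorem sum_ite_ne_le_cutWeight {ι : Type*} (w : α → α → ℕ) (g : α → C) (s : Finset ι)
    (f : ι → α × α) (hf : Set.InjOn f s) (hw : ∀ i ∈ s, 0 < w (f i).1 (f i).2) :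
    ∑ i ∈ s, (if g (f i).1 ≠ g (f i).2 then 1 else 0) ≤ cutWeight w g := by
  calc ∑ i ∈ s, (if g (f i).1 ≠ g (f i).2 then 1 else 0)
      ≤ ∑ i ∈ s, (if g (f i).1 ≠ g (f i).2 then w (f i).1 (f i).2 else 0) := by
        gcongr with i hi
        split_ifs
        exacts [hw i hi, le_rfl]
    _ = ∑ z ∈ s.image f, (if g z.1 ≠ g z.2 then w z.1 z.2 else 0) := by
        rw [Finset.sum_image hf]
    _ ≤ ∑ z : α × α, (if g z.1 ≠ g z.2 then w z.1 z.2 else 0) :=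
        Finset.sum_le_sum_of_subset (Finset.subset_univ _)
    _ = cutWeight w g := Fintype.sum_prod_type _

theorem changeCount_comp_le_cutWeight (w : α → α → ℕ) (g : α → C) (v : ℕ → α) {n : ℕ}
    (hv : Set.InjOn v (Set.Iio n)) (hw : ∀ m < n, 0 < w (v m) (v (m + 1))) :
    changeCount (g ∘ v) 0 n ≤ cutWeight w g := by
  refine sum_ite_ne_le_cutWeight w g _ (fun m => (v m, v (m + 1))) ?_ (by simpa using hw)
  intro m hm m' hm' h
  exact hv (by simpa using hm) (by simpa using hm') (congrArg Prod.fst h)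

theorem two_le_cutWeight_of_cycle (w : α → α → ℕ) (g : α → C) (v : ℕ → α) {n : ℕ}
    (hv : Set.InjOn v (Set.Iio n)) (hclosed : v n = v 0) (hw : ∀ m < n, 0 < w (v m) (v (m + 1)))
    {i j : ℕ} (hi : i < n) (hj : j < n) (hij : g (v i) ≠ g (v j)) : 2 ≤ cutWeight w g :=
  (two_le_changeCount_of_closed (g ∘ v) (congrArg g hclosed) hi.le hj.le hij).trans
    (changeCount_comp_le_cutWeight w g v hv hw)

end CutWeight

section PartitionDigraph

variable {k : ℕ} {p : Fin k → ℕ} {C : Type*}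

-- `j` is read modulo `p i`, so that a path of `D_η` (and, for `k = 1`, its cycle) is walked by
-- a sequence indexed by `ℕ`.
def pathVert (i : Fin k) (hi : 0 < p i) (j : ℕ) : PartVert k p :=
  ⟨i, ⟨j % p i, Nat.mod_lt _ hi⟩⟩

theorem pathVert_of_lt {i : Fin k} (hi : 0 < p i) {j : ℕ} (hj : j < p i) :
    pathVert i hi j = ⟨i, ⟨j, hj⟩⟩ :=
  Sigma.ext rfl (heq_of_eq (Fin.ext (Nat.mod_eq_of_lt hj)))

theorem pathVert_injOn (i : Fin k) (hi : 0 < p i) : Set.InjOn (pathVert i hi) (Set.Iio (p i)) := by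
  intro j hj j' hj' h
  rw [pathVert_of_lt hi hj, pathVert_of_lt hi hj'] at h
  exact congrArg (fun a : PartVert k p => a.2.val) h

def firstVert (i : Fin k) (hi : 0 < p i) : PartVert k p :=
  ⟨i, ⟨0, hi⟩⟩

def lastVert (i : Fin k) (hi : 0 < p i) : PartVert k p :=
  ⟨i, ⟨p i - 1, Nat.sub_lt hi one_pos⟩⟩

def fwdArc (a b : PartVert k p) : ℕ :=
  if a.1 = b.1 ∧ b.2.val = a.2.val + 1 then 1 else 0

def cycleArc (σ : Fin k → ℕ) (a b : PartVert k p) : ℕ :=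
  if a.2.val = σ a.1 ∧ b.2.val = σ b.1 ∧ b.1.val = (a.1.val + 1) % k then 1 else 0

def succArc (a b : PartVert k p) : ℕ :=
  if b.2.val = (a.2.val + 1) % p a.1 then 1 else 0

theorem arcMult_eq_of_ne_one (hk : k ≠ 1) (a b : PartVert k p) :
    arcMult p a b = fwdArc a b + fwdArc b a + cycleArc (fun _ => 0) a b +
      cycleArc (fun i => p i - 1) a b := by
  have hpath : (if a.1 = b.1 ∧ (b.2.val = a.2.val + 1 ∨ a.2.val = b.2.val + 1) then 1 else 0)
      = fwdArc a b + fwdArc b a := by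
    unfold fwdArc
    by_cases h : a.1 = b.1
    · simp only [h, true_and]
      split_ifs <;> omega
    · simp [h, Ne.symm h]
  rw [arcMult, if_neg hk, hpath, cycleArc, cycleArc]

theorem arcMult_eq_of_eq_one (p : Fin 1 → ℕ) (a b : PartVert 1 p) :
    arcMult p a b = succArc a b + succArc b a := by
  simp [arcMult, succArc]

theorem cutWeight_arcMult_of_ne_one (hk : k ≠ 1) (g : PartVert k p → C) :
    cutWeight (arcMult p) g = 2 * cutWeight fwdArc g + cutWeight (cycleArc fun _ => 0) g +
      cutWeight (cycleArc fun i => p i - 1) g := by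
  simp only [funext₂ (arcMult_eq_of_ne_one hk), cutWeight_add, cutWeight_swap fwdArc]
  ring

theorem cutWeight_arcMult_of_eq_one (p : Fin 1 → ℕ) (g : PartVert 1 p → C) :
    cutWeight (arcMult p) g = 2 * cutWeight succArc g := by
  simp only [funext₂ (arcMult_eq_of_eq_one p), cutWeight_add, cutWeight_swap succArc]
  ring

theorem two_le_cutWeight_cycleArc (σ : Fin k → ℕ) (hσ : ∀ i, σ i < p i) (g : PartVert k p → C)
    {i j : Fin k} (hij : g ⟨i, ⟨σ i, hσ i⟩⟩ ≠ g ⟨j, ⟨σ j, hσ j⟩⟩) :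
    2 ≤ cutWeight (cycleArc σ) g := by
  have hk : 0 < k := i.pos
  let u : Fin k → PartVert k p := fun i => ⟨i, ⟨σ i, hσ i⟩⟩
  let v : ℕ → PartVert k p := fun m => u ⟨m % k, Nat.mod_lt _ hk⟩
  have hv : ∀ i : Fin k, v i = u i := fun i => congrArg u (Fin.ext (Nat.mod_eq_of_lt i.isLt))
  refine two_le_cutWeight_of_cycle _ g v (n := k) ?_ ?_ ?_ i.isLt j.isLt (by rwa [hv, hv])
  · intro m hm m' hm' h
    have := congrArg (fun a : PartVert k p => a.1.val) h
    simpa [v, u, Nat.mod_eq_of_lt (Set.mem_Iio.mp hm), Nat.mod_eq_of_lt (Set.mem_Iio.mp hm')]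
      using this
  · exact congrArg u (Fin.ext (by simp))
  · intro m _
    simp [cycleArc, v, u, Nat.mod_add_mod]

theorem two_le_cutWeight_succArc (g : PartVert k p → C) {a b : PartVert k p} (hab : a.1 = b.1)
    (h : g a ≠ g b) : 2 ≤ cutWeight succArc g := by
  obtain ⟨i, j⟩ := a
  obtain ⟨i', j'⟩ := b
  dsimp only at hab
  subst hab
  have hi : 0 < p i := j.pos
  refine two_le_cutWeight_of_cycle _ g (pathVert i hi) (n := p i) (pathVert_injOn i hi) ?_ ?_
    j.isLt j'.isLt (by rwa [pathVert_of_lt, pathVert_of_lt])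
  · exact Sigma.ext rfl (heq_of_eq (Fin.ext (by simp [pathVert])))
  · intro m _
    simp [succArc, pathVert, Nat.mod_add_mod]

theorem sum_changeCount_le_cutWeight_fwdArc (hp : ∀ i, 0 < p i) (g : PartVert k p → C) :
    ∑ i, changeCount (g ∘ pathVert i (hp i)) 0 (p i - 1) ≤ cutWeight fwdArc g := by
  let f : (Σ _ : Fin k, ℕ) → PartVert k p × PartVert k p :=
    fun x => (pathVert x.1 (hp x.1) x.2, pathVert x.1 (hp x.1) (x.2 + 1))
  let s := Finset.univ.sigma fun i => Finset.Ico 0 (p i - 1)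
  have hmem : ∀ x ∈ s, x.2 + 1 < p x.1 := by
    intro x hx
    have := (Finset.mem_Ico.mp (Finset.mem_sigma.mp hx).2).2
    omega
  refine le_trans (le_of_eq ?_) (sum_ite_ne_le_cutWeight fwdArc g s f ?_ ?_)
  · rw [Finset.sum_sigma]
    rfl
  · rintro ⟨i, j⟩ hx ⟨i', j'⟩ hx' h
    have h₁ := hmem _ hx
    have h₂ := hmem _ hx'
    simp only [f, Prod.mk.injEq] at h h₁ h₂
    rw [pathVert_of_lt _ (by omega : j < p i), pathVert_of_lt _ (by omega : j' < p i')] at h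
    obtain ⟨rfl, hj⟩ := Sigma.mk.inj_iff.mp h.1
    simp_all
  · intro x hx
    have := hmem x hx
    simp [f, fwdArc, pathVert, Nat.mod_eq_of_lt this, Nat.mod_eq_of_lt (by omega : x.2 < p x.1)]

theorem changeCount_pathVert_le_cutWeight_fwdArc (hp : ∀ i, 0 < p i) (g : PartVert k p → C)
    (i : Fin k) : changeCount (g ∘ pathVert i (hp i)) 0 (p i - 1) ≤ cutWeight fwdArc g :=
  (Finset.single_le_sum (f := fun i => changeCount (g ∘ pathVert i (hp i)) 0 (p i - 1))
    (fun _ _ => Nat.zero_le _) (Finset.mem_univ i)).trans (sum_changeCount_le_cutWeight_fwdArc hp g)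

theorem one_le_changeCount_pathVert (g : PartVert k p → C) {i : Fin k} (hi : 0 < p i)
    (h : g (firstVert i hi) ≠ g (lastVert i hi)) :
    1 ≤ changeCount (g ∘ pathVert i hi) 0 (p i - 1) :=
  one_le_changeCount _ (Nat.zero_le _) (by
    rwa [Function.comp_apply, Function.comp_apply, pathVert_of_lt hi hi,
      pathVert_of_lt hi (Nat.sub_lt hi one_pos)])

theorem two_le_changeCount_pathVert (g : PartVert k p → C) {i : Fin k} (hi : 0 < p i)
    {j : Fin (p i)} (hends : g (firstVert i hi) = g (lastVert i hi))
    (hj : g ⟨i, j⟩ ≠ g (firstVert i hi)) :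
    2 ≤ changeCount (g ∘ pathVert i hi) 0 (p i - 1) :=
  two_le_changeCount _ (Nat.zero_le j.val) (Nat.le_sub_one_of_lt j.isLt)
    (by rwa [Function.comp_apply, Function.comp_apply, pathVert_of_lt hi hi,
      pathVert_of_lt hi (Nat.sub_lt hi one_pos)])
    (by rwa [Function.comp_apply, Function.comp_apply, pathVert_of_lt hi hi,
      pathVert_of_lt hi j.isLt])

theorem two_le_cutWeight_fwdArc (hk : 2 ≤ k) (hp : ∀ i, 0 < p i) (g : PartVert k p → C)
    {a b : PartVert k p} (hab : g a ≠ g b)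
    (hfirst : ∀ i j, g (firstVert i (hp i)) = g (firstVert j (hp j)))
    (hlast : ∀ i j, g (lastVert i (hp i)) = g (lastVert j (hp j))) :
    2 ≤ cutWeight fwdArc g := by
  let i₀ : Fin k := ⟨0, by omega⟩
  let i₁ : Fin k := ⟨1, by omega⟩
  let P : Fin k → ℕ := fun i => changeCount (g ∘ pathVert i (hp i)) 0 (p i - 1)
  by_cases hc : g (firstVert i₀ (hp i₀)) = g (lastVert i₀ (hp i₀))
  · -- all path ends share one colour, so a vertex of the other colour is interior to its path
    obtain ⟨⟨i, j⟩, hj⟩ : ∃ c, g c ≠ g (firstVert i₀ (hp i₀)) := by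
      by_cases ha : g a = g (firstVert i₀ (hp i₀))
      exacts [⟨b, fun hb => hab (ha.trans hb.symm)⟩, ⟨a, ha⟩]
    have hends : g (firstVert i (hp i)) = g (lastVert i (hp i)) := by
      rw [hfirst i i₀, hlast i i₀, hc]
    exact (two_le_changeCount_pathVert g (hp i) hends fun h => hj (h.trans (hfirst i i₀))).trans
      (changeCount_pathVert_le_cutWeight_fwdArc hp g i)
  · have h₀ : 1 ≤ P i₀ := one_le_changeCount_pathVert g (hp i₀) hc
    have h₁ : 1 ≤ P i₁ := one_le_changeCount_pathVert g (hp i₁) fun h =>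
      hc ((hfirst i₀ i₁).trans (h.trans (hlast i₁ i₀)))
    calc 2 ≤ P i₀ + P i₁ := by omega
      _ ≤ ∑ i, P i := Finset.add_le_sum (fun _ _ => Nat.zero_le _) (Finset.mem_univ _)
          (Finset.mem_univ _) (by simp [i₀, i₁, Fin.ext_iff])
      _ ≤ cutWeight fwdArc g := sum_changeCount_le_cutWeight_fwdArc hp g

theorem four_le_cutWeight_arcMult_of_ne_one (hk : k ≠ 1) (hp : ∀ i, 0 < p i)
    (g : PartVert k p → C) {a b : PartVert k p} (hab : g a ≠ g b) :
    4 ≤ cutWeight (arcMult p) g := by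
  rw [cutWeight_arcMult_of_ne_one hk]
  have hk₂ : 2 ≤ k := by have := a.1.pos; omega
  let first : Fin k → C := fun i => g (firstVert i (hp i))
  let last : Fin k → C := fun i => g (lastVert i (hp i))
  have hpath : ∀ i, first i ≠ last i → 1 ≤ cutWeight fwdArc g := fun i h =>
    (one_le_changeCount_pathVert g (hp i) h).trans (changeCount_pathVert_le_cutWeight_fwdArc hp g i)
  have hfirst : ∀ i j, first i ≠ first j → 2 ≤ cutWeight (cycleArc fun _ => 0) g :=
    fun _ _ h => two_le_cutWeight_cycleArc _ hp g h
  have hlast : ∀ i j, last i ≠ last j → 2 ≤ cutWeight (cycleArc fun i => p i - 1) g :=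
    fun _ _ h => two_le_cutWeight_cycleArc _ (fun i => Nat.sub_lt (hp i) one_pos) g h
  by_cases hF : ∀ i j, first i = first j <;> by_cases hL : ∀ i j, last i = last j
  · have := two_le_cutWeight_fwdArc hk₂ hp g hab hF hL
    omega
  · -- one cycle is monochromatic and the other is not, so some path has ends of both colours
    push Not at hL
    obtain ⟨i, j, hij⟩ := hL
    have : first i ≠ last i ∨ first j ≠ last j := by
      by_contra! h
      exact hij (by rw [← h.1, ← h.2, hF i j])
    rcases this with h | h <;> have := hpath _ h <;> have := hlast i j hij <;> omega
  · push Not at hF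
    obtain ⟨i, j, hij⟩ := hF
    have : first i ≠ last i ∨ first j ≠ last j := by
      by_contra! h
      exact hij (by rw [h.1, h.2, hL i j])
    rcases this with h | h <;> have := hpath _ h <;> have := hfirst i j hij <;> omega
  · push Not at hF hL
    obtain ⟨i, j, hij⟩ := hF
    obtain ⟨i', j', hij'⟩ := hL
    have := hfirst i j hij
    have := hlast i' j' hij'
    omega

theorem four_le_cutWeight_arcMult (hp : ∀ i, 0 < p i) (g : PartVert k p → C)
    {a b : PartVert k p} (hab : g a ≠ g b) : 4 ≤ cutWeight (arcMult p) g := by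
  by_cases hk : k = 1
  · subst hk
    rw [cutWeight_arcMult_of_eq_one]
    have := two_le_cutWeight_succArc g (Subsingleton.elim a.1 b.1) hab
    omega
  · exact four_le_cutWeight_arcMult_of_ne_one hk hp g hab

end PartitionDigraph

theorem cutWeight_comp_invFunOn {W α C : Type*} [Nonempty W] [Fintype α] (w : α → α → ℕ)
    (c : W → C) {ℓ : W → α} {s : Finset W} (hℓ : Set.BijOn ℓ s Set.univ) :
    cutWeight w (c ∘ Function.invFunOn ℓ s) =
      ∑ u ∈ s, ∑ v ∈ s, if c u ≠ c v then w (ℓ u) (ℓ v) else 0 := by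
  have hc : ∀ u ∈ s, (c ∘ Function.invFunOn ℓ s) (ℓ u) = c u := fun u hu =>
    congrArg c (hℓ.injOn.leftInvOn_invFunOn hu)
  have hsurj : Set.SurjOn ℓ s (Finset.univ : Finset α) := by
    simpa using hℓ.surjOn
  symm
  refine Finset.sum_nbij ℓ (fun _ _ => Finset.mem_univ _) hℓ.injOn hsurj fun u hu => ?_
  refine Finset.sum_nbij ℓ (fun _ _ => Finset.mem_univ _) hℓ.injOn hsurj fun v hv => ?_
  rw [hc u hu, hc v hv]

namespace SimpleGraph

variable {V : Type*} {G : SimpleGraph V}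

theorem Preconnected.reachable_deleteEdges_or (hG : G.Preconnected) (x y u : V) :
    (G.deleteEdges {s(x, y)}).Reachable x u ∨ (G.deleteEdges {s(x, y)}).Reachable y u := by
  suffices ∀ {u z : V} (q : G.Walk u z),
      (G.deleteEdges {s(x, y)}).Reachable x z ∨ (G.deleteEdges {s(x, y)}).Reachable y z →
      (G.deleteEdges {s(x, y)}).Reachable x u ∨ (G.deleteEdges {s(x, y)}).Reachable y u from
    this (hG u x).some (Or.inl (Reachable.refl x))
  intro u z q
  induction q with
  | nil => exact id
  | @cons u u' z hadj q ih =>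
    intro hz
    by_cases he : s(u, u') = s(x, y)
    · rcases Sym2.eq_iff.mp he with ⟨rfl, -⟩ | ⟨rfl, -⟩
      exacts [Or.inl (Reachable.refl u), Or.inr (Reachable.refl u)]
    · have hadj' : (G.deleteEdges {s(x, y)}).Adj u' u := by
        refine deleteEdges_adj.mpr ⟨hadj.symm, fun h => he ?_⟩
        rw [Sym2.eq_swap]
        exact Set.mem_singleton_iff.mp h
      exact (ih hz).imp (·.trans hadj'.reachable) (·.trans hadj'.reachable)

theorem Preconnected.reachable_deleteEdges_iff (hG : G.Preconnected) (x y u v : V) :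
    (G.deleteEdges {s(x, y)}).Reachable u v ↔
      ((G.deleteEdges {s(x, y)}).Reachable x u ↔ (G.deleteEdges {s(x, y)}).Reachable x v) := by
  refine ⟨fun h => ⟨(·.trans h), (·.trans h.symm)⟩, fun h => ?_⟩
  by_cases hu : (G.deleteEdges {s(x, y)}).Reachable x u
  · exact hu.symm.trans (h.mp hu)
  · have hyu := (hG.reachable_deleteEdges_or x y u).resolve_left hu
    have hyv := (hG.reachable_deleteEdges_or x y v).resolve_left (mt h.mpr hu)
    exact hyu.symm.trans hyv

theorem IsTree.not_reachable_deleteEdges (hT : G.IsTree) {x y : V} (hxy : G.Adj x y) :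
    ¬(G.deleteEdges {s(x, y)}).Reachable x y :=
  isBridge_iff.mp (isAcyclic_iff_forall_adj_isBridge.mp hT.isAcyclic hxy)

theorem IsTree.exists_isPath_mem_edges_iff (hT : G.IsTree) (x y u v : V) :
    (∃ w : G.Walk u v, w.IsPath ∧ s(x, y) ∈ w.edges) ↔
      ¬(G.deleteEdges {s(x, y)}).Reachable u v := by
  rw [reachable_deleteEdges_iff_exists_walk, not_exists_not]
  constructor
  · rintro ⟨w, hw, he⟩ q
    have : q.bypass = w :=
      Subtype.mk.inj ((hT.isAcyclic.subsingleton_path u v).elim ⟨_, q.bypass_isPath⟩ ⟨w, hw⟩)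
    exact q.edges_bypass_subset_edges (this ▸ he)
  · intro h
    obtain ⟨w, hw⟩ := hT.connected.exists_isPath u v
    exact ⟨w, hw, h w⟩

theorem IsTree.exists_leaf_reachable_deleteEdges [Finite V] (hT : G.IsTree) {x y : V}
    (hxy : G.Adj x y) :
    ∃ u, (G.neighborSet u).ncard = 1 ∧ (G.deleteEdges {s(x, y)}).Reachable x u := by
  -- a vertex on the side of `x` farthest from `y` is a leaf
  obtain ⟨u, hu, hmax⟩ := Set.exists_max_image {u | (G.deleteEdges {s(x, y)}).Reachable x u}
    (G.dist y) (Set.toFinite _) ⟨x, Reachable.refl x⟩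
  have huy : u ≠ y := by
    rintro rfl
    exact hT.not_reachable_deleteEdges hxy hu
  obtain ⟨q, hq, hqlen⟩ := (hT.connected y u).exists_path_of_dist
  have hnil : ¬q.Nil := q.not_nil_of_ne huy.symm
  refine ⟨u, ?_, hu⟩
  suffices G.neighborSet u = {q.penultimate} by rw [this, Set.ncard_singleton]
  refine Set.eq_singleton_iff_unique_mem.mpr ⟨(q.adj_penultimate hnil).symm, fun w hw => ?_⟩
  rw [mem_neighborSet] at hw
  refine hT.isAcyclic.eq_penultimate_of_adj_end hq hw (by_contra fun hwq => ?_)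
  have hadj : (G.deleteEdges {s(x, y)}).Adj u w := by
    refine deleteEdges_adj.mpr ⟨hw, fun he => ?_⟩
    rcases Sym2.eq_iff.mp (Set.mem_singleton_iff.mp he) with ⟨-, rfl⟩ | ⟨rfl, -⟩
    exacts [hwq q.start_mem_support, huy rfl]
  obtain ⟨q', hq', hq'len⟩ := (hT.connected y w).exists_path_of_dist
  have : q' = q.concat hw :=
    Subtype.mk.inj ((hT.isAcyclic.subsingleton_path y w).elim ⟨q', hq'⟩ ⟨_, hq.concat hwq hw⟩)
  have hle := hmax w (hu.trans hadj.reachable)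
  rw [← hq'len, this, Walk.length_concat, hqlen] at hle
  omega

end SimpleGraph

theorem tree_dipath_family_covers_general (V : Type*) [Fintype V]
    (T : SimpleGraph V) (hT : T.IsTree)
    (k : ℕ) (p : Fin k → ℕ)
    (hp : ∀ i, 1 ≤ p i)
    (ℓ : V → PartVert k p)
    (hbij : Set.BijOn ℓ {v : V | (T.neighborSet v).ncard = 1} Set.univ) :
    ∀ e ∈ T.edgeSet,
      4 ≤ ∑ u : V, ∑ v : V,
        (if (T.neighborSet u).ncard = 1 ∧ (T.neighborSet v).ncard = 1 ∧
            (∃ w : T.Walk u v, w.IsPath ∧ e ∈ w.edges)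
          then arcMult p (ℓ u) (ℓ v) else 0) := by
  intro e he
  induction e using Sym2.ind with | h x y => ?_
  have hxy : T.Adj x y := he
  have : Nonempty V := ⟨x⟩
  let leaves : Finset V := {v : V | (T.neighborSet v).ncard = 1}.toFinset
  let side : V → Prop := (T.deleteEdges {s(x, y)}).Reachable x
  obtain ⟨u₁, hu₁, hside₁⟩ := hT.exists_leaf_reachable_deleteEdges hxy
  obtain ⟨u₂, hu₂, hside₂⟩ := hT.exists_leaf_reachable_deleteEdges hxy.symm
  have hsides : side u₁ ≠ side u₂ := by
    rw [Sym2.eq_swap] at hside₂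
    exact fun h => hT.not_reachable_deleteEdges hxy ((h ▸ hside₁ : side u₂).trans hside₂.symm)
  have hcross : ∀ u v, (∃ w : T.Walk u v, w.IsPath ∧ s(x, y) ∈ w.edges) ↔ side u ≠ side v :=
    fun u v => by
      rw [hT.exists_isPath_mem_edges_iff, hT.connected.preconnected.reachable_deleteEdges_iff,
        ne_eq, eq_iff_iff]
  have hℓ : Set.BijOn ℓ leaves Set.univ := by simpa [leaves] using hbij
  have hinv : ∀ u, (T.neighborSet u).ncard = 1 → Function.invFunOn ℓ leaves (ℓ u) = u :=
    fun u hu => hℓ.injOn.leftInvOn_invFunOn (by simpa [leaves] using hu)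
  calc 4 ≤ cutWeight (arcMult p) (side ∘ Function.invFunOn ℓ leaves) :=
        four_le_cutWeight_arcMult hp _ (a := ℓ u₁) (b := ℓ u₂)
          (by simpa only [Function.comp_apply, hinv u₁ hu₁, hinv u₂ hu₂])
    _ = _ := cutWeight_comp_invFunOn _ side hℓ
    _ = _ := by simp [leaves, Finset.sum_filter, hcross, ite_and]

/-- Let `T` be a tree with `n ≥ 2` leaves, `η` a `k`-partition of `n` and `ℓ` a
bijection from the leaf set of `T` to the vertex set of `D_η`.  Then every edge of `T`
is traversed by at least four directed paths of the family `𝒫(T, η, ℓ)`, consisting of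
the directed leaf-to-leaf paths `T⃗[u,v]` over all arcs `(ℓ u, ℓ v)` of `D_η` (counted
with arc multiplicity). -/
theorem tree_dipath_family_covers (V : Type*) [Fintype V]
    (T : SimpleGraph V) (hT : T.IsTree)
    (n k : ℕ) (hn : 2 ≤ n) (hk : 1 ≤ k) (hkn : k ≤ n) (p : Fin k → ℕ)
    (hp : ∀ i, 1 ≤ p i) (hsum : ∑ i, p i = n)
    (ℓ : V → PartVert k p)
    (hbij : Set.BijOn ℓ {v : V | (T.neighborSet v).ncard = 1} Set.univ) :
    ∀ e ∈ T.edgeSet,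
      4 ≤ ∑ u : V, ∑ v : V,
        (if (T.neighborSet u).ncard = 1 ∧ (T.neighborSet v).ncard = 1 ∧
            (∃ w : T.Walk u v, w.IsPath ∧ e ∈ w.edges)
          then arcMult p (ℓ u) (ℓ v) else 0) :=
  tree_dipath_family_covers_general V T hT k p hp ℓ hbij
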